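/- Let R be the interleaved double chain X : ε : Y : ε : X⁻¹ : ε : Y⁻¹ : ε (a root). Then for every k ≥ 0, applying the f₂-lift k times yields f₂ᵏ(R) = X : (YX)ᵏ : Y : ε : X⁻¹ : (Y⁻¹X⁻¹)ᵏ : Y⁻¹ : ε, and for k ≥ 1 the word X Y X⁻¹ Y⁻¹ occurs as a subword of the concatenation of parts 2 through 6 of f₂ᵏ(R). -/

import Mathlib

/-- Letterwise reversal of a word over an alphabet with reversal `inv`. -/
def wrev {A : Type*} (inv : A → A) (W : List A) : List A := (W.map inv).reverse

/-- An interleaved double chain (indices mod 8). -/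
def IDC {A : Type*} (inv : A → A) (U : ZMod 8 → List A) : Prop :=
  ∀ i : ZMod 8, U i ++ U (i + 1) = wrev inv (U (i + 4) ++ U (i + 5))

/-- The `f_k`-lift: for `j ≡ k (mod 4)` replace `U_j` by `(U_{j+3}U_{j+4}U_{j+5})⁻¹`,
and keep the remaining parts. -/
def flift {A : Type*} (inv : A → A) (k : ZMod 8) (U : ZMod 8 → List A) :
    ZMod 8 → List A :=
  fun j =>
    if j = k ∨ j = k + 4 then wrev inv (U (j + 3) ++ U (j + 4) ++ U (j + 5)) else U j

/-- `k`-fold concatenation of a word. -/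
def wpow {A : Type*} (W : List A) (k : ℕ) : List A := (List.replicate k W).flatten

/-- The root `X : ε : Y : ε : X⁻¹ : ε : Y⁻¹ : ε`. -/
def rootChain {A : Type*} (inv : A → A) (X Y : List A) : ZMod 8 → List A :=
  fun i =>
    if i = 1 then X
    else if i = 3 then Y
    else if i = 5 then wrev inv X
    else if i = 7 then wrev inv Y
    else []

/-!
Under the `f₂`-lift of `X : (YX)ᵏ : Y : ε : X⁻¹ : (Y⁻¹X⁻¹)ᵏ : Y⁻¹ : ε` only parts 2 and 6 change,
to `(X⁻¹ (Y⁻¹X⁻¹)ᵏ Y⁻¹)⁻¹ = (YX)ᵏ⁺¹` and `(X (YX)ᵏ Y)⁻¹ = (Y⁻¹X⁻¹)ᵏ⁺¹`, so the shape is stable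
and induction on `k` gives the iterate. For `k ≥ 1`, the last `X` of `(YX)ᵏ`, then `Y`, `X⁻¹` and
the first `Y⁻¹` of `(Y⁻¹X⁻¹)ᵏ` spell `X Y X⁻¹ Y⁻¹` inside parts 2–6.
-/

section Words

variable {A : Type*}

lemma wrev_append (inv : A → A) (a b : List A) :
    wrev inv (a ++ b) = wrev inv b ++ wrev inv a := by
  simp [wrev]

lemma wrev_wrev {inv : A → A} (hinv : Function.Involutive inv) (W : List A) :
    wrev inv (wrev inv W) = W := by
  simp [wrev, List.map_reverse, hinv.comp_self]

lemma wpow_succ (W : List A) (k : ℕ) : wpow W (k + 1) = W ++ wpow W k := by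
  simp [wpow, List.replicate_succ]

lemma wpow_succ' (W : List A) (k : ℕ) : wpow W (k + 1) = wpow W k ++ W := by
  simp [wpow, List.replicate_succ']

lemma wrev_wpow (inv : A → A) (W : List A) (k : ℕ) :
    wrev inv (wpow W k) = wpow (wrev inv W) k := by
  induction k with
  | zero => rfl
  | succ n ih => rw [wpow_succ, wrev_append, ih, wpow_succ']

lemma wpow_append_succ (a b : List A) (k : ℕ) :
    wpow (a ++ b) (k + 1) = a ++ wpow (b ++ a) k ++ b := by
  induction k with
  | zero => simp [wpow]
  | succ n ih => rw [wpow_succ, ih, wpow_succ]; simp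

lemma wrev_append_wpow_append (inv : A → A) (a b : List A) (k : ℕ) :
    wrev inv (a ++ wpow (b ++ a) k ++ b) = wpow (wrev inv b ++ wrev inv a) (k + 1) := by
  rw [wpow_append_succ, wrev_append, wrev_append, wrev_wpow, wrev_append, List.append_assoc]

lemma append_infix_wpow_append_wpow (a b c d : List A) (k : ℕ) :
    a ++ b ++ c ++ d <:+: wpow (b ++ a) (k + 1) ++ b ++ c ++ wpow (d ++ c) (k + 1) :=
  ⟨wpow (b ++ a) k ++ b, c ++ wpow (d ++ c) k, by
    rw [wpow_succ' (b ++ a), wpow_succ (d ++ c)]; simp⟩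

end Words

def liftedRoot {A : Type*} (inv : A → A) (X Y : List A) (k : ℕ) : ZMod 8 → List A :=
  fun i =>
    if i = 1 then X
    else if i = 2 then wpow (Y ++ X) k
    else if i = 3 then Y
    else if i = 5 then wrev inv X
    else if i = 6 then wpow (wrev inv Y ++ wrev inv X) k
    else if i = 7 then wrev inv Y
    else []

section LiftedRoot

variable {A : Type*} {inv : A → A}

lemma liftedRoot_zero (X Y : List A) : liftedRoot inv X Y 0 = rootChain inv X Y := by
  funext i
  fin_cases i <;> rfl

lemma flift_two_liftedRoot (hinv : Function.Involutive inv) (X Y : List A) (k : ℕ) :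
    flift inv 2 (liftedRoot inv X Y k) = liftedRoot inv X Y (k + 1) := by
  funext j
  fin_cases j
  all_goals try rfl
  · change wrev inv (wrev inv X ++ wpow (wrev inv Y ++ wrev inv X) k ++ wrev inv Y) = _
    rw [wrev_append_wpow_append, wrev_wrev hinv, wrev_wrev hinv]
    rfl
  · change wrev inv (X ++ wpow (Y ++ X) k ++ Y) = _
    rw [wrev_append_wpow_append]
    rfl

lemma iterate_flift_two_rootChain (hinv : Function.Involutive inv) (X Y : List A) (k : ℕ) :
    (flift inv 2)^[k] (rootChain inv X Y) = liftedRoot inv X Y k := by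
  induction k with
  | zero => exact (liftedRoot_zero X Y).symm
  | succ n ih => rw [Function.iterate_succ_apply', ih, flift_two_liftedRoot hinv]

lemma commutator_infix_liftedRoot (X Y : List A) (k : ℕ) :
    X ++ Y ++ wrev inv X ++ wrev inv Y <:+:
      liftedRoot inv X Y (k + 1) 2 ++ liftedRoot inv X Y (k + 1) 3 ++
        liftedRoot inv X Y (k + 1) 4 ++ liftedRoot inv X Y (k + 1) 5 ++
        liftedRoot inv X Y (k + 1) 6 := by
  change _ <:+: wpow (Y ++ X) (k + 1) ++ Y ++ [] ++ wrev inv X ++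
    wpow (wrev inv Y ++ wrev inv X) (k + 1)
  simpa using append_infix_wpow_append_wpow X Y (wrev inv X) (wrev inv Y) k

end LiftedRoot

theorem stmt12 {A : Type*} (inv : A → A) (hinv : Function.Involutive inv)
    (X Y : List A) (k : ℕ) :
    ((flift inv 2)^[k] (rootChain inv X Y) = fun i : ZMod 8 =>
      if i = 1 then X
      else if i = 2 then wpow (Y ++ X) k
      else if i = 3 then Y
      else if i = 5 then wrev inv X
      else if i = 6 then wpow (wrev inv Y ++ wrev inv X) k
      else if i = 7 then wrev inv Y
      else []) ∧
    (1 ≤ k →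
      (X ++ Y ++ wrev inv X ++ wrev inv Y) <:+:
        ((flift inv 2)^[k] (rootChain inv X Y) 2 ++
         (flift inv 2)^[k] (rootChain inv X Y) 3 ++
         (flift inv 2)^[k] (rootChain inv X Y) 4 ++
         (flift inv 2)^[k] (rootChain inv X Y) 5 ++
         (flift inv 2)^[k] (rootChain inv X Y) 6)) := by
  rw [iterate_flift_two_rootChain hinv]
  refine ⟨rfl, fun hk => ?_⟩
  obtain ⟨m, rfl⟩ := Nat.exists_eq_add_of_le' hk
  exact commutator_infix_liftedRoot X Y m
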